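/- If f \in A^2(D) and f(a) = 0 for some a \in D, then g(z) = f(z)/(z-a) belongs to A^2(D). Consequently the zero-based invariant subspace I_{\{a\}} = \{f \in A^2(D) : f(a)=0\} equals (z-a) A^2(D). -/

import Mathlib

/-!
Division by `z - a` preserves square integrability: near `a` the quotient `dslope f a` is
continuous, hence bounded on a small closed disc around `a`, and outside that disc of radius `r`
it is dominated by `|f| / r`. Conversely, `z - a` is bounded on the disc, so multiplying by it
keeps a function in `A²(D)`.
-/

open MeasureTheory Metric Complex

/-- Membership in the Bergman space of the unit disc. -/
def BergmanDisc (f : ℂ → ℂ) : Prop :=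
  DifferentiableOn ℂ f (ball (0:ℂ) 1) ∧
    Integrable (fun z => ‖f z‖ ^ 2) (volume.restrict (ball (0:ℂ) 1))

theorem sub_mul_dslope_of_apply_eq_zero {𝕜 : Type*} [NontriviallyNormedField 𝕜] {f : 𝕜 → 𝕜}
    {a : 𝕜} (hfa : f a = 0) (z : 𝕜) : (z - a) * dslope f a z = f z := by
  simpa [hfa] using sub_smul_dslope f a z

theorem integrableOn_norm_pow_of_eq_sub_mul {μ : Measure ℂ} [IsFiniteMeasureOnCompacts μ]
    {U : Set ℂ} (hU : IsOpen U) {a : ℂ} (ha : a ∈ U) {f g : ℂ → ℂ} (n : ℕ)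
    (hf : IntegrableOn (fun z => ‖f z‖ ^ n) U μ) (hg : ContinuousOn g U)
    (hfg : ∀ z ∈ U, f z = (z - a) * g z) :
    IntegrableOn (fun z => ‖g z‖ ^ n) U μ := by
  obtain ⟨r, hr, hrU⟩ := nhds_basis_closedBall.mem_iff.mp (hU.mem_nhds ha)
  have hgn : ContinuousOn (fun z => ‖g z‖ ^ n) U := hg.norm.pow n
  have near : IntegrableOn (fun z => ‖g z‖ ^ n) (closedBall a r) μ :=
    (hgn.mono hrU).integrableOn_compact (isCompact_closedBall a r)
  have hfar : MeasurableSet (U \ ball a r) := hU.measurableSet.diff measurableSet_ball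
  have far : IntegrableOn (fun z => ‖g z‖ ^ n) (U \ ball a r) μ := by
    refine ((hf.mono_set Set.sdiff_subset).const_mul (r ^ n)⁻¹).mono'
      ((hgn.mono Set.sdiff_subset).aestronglyMeasurable hfar) ?_
    filter_upwards [ae_restrict_mem hfar] with z ⟨hzU, hza⟩
    have hrz : r ≤ ‖z - a‖ := by simpa [dist_eq] using hza
    rw [Real.norm_of_nonneg (by positivity), le_inv_mul_iff₀ (by positivity), hfg z hzU,
      norm_mul, mul_pow]
    gcongr
  refine (near.union far).mono_set fun z hz => ?_
  by_cases hza : z ∈ ball a r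
  · exact Or.inl (ball_subset_closedBall hza)
  · exact Or.inr ⟨hz, hza⟩

namespace BergmanDisc

theorem congr {f g : ℂ → ℂ} (hf : BergmanDisc f) (hfg : Set.EqOn f g (ball 0 1)) :
    BergmanDisc g := by
  refine ⟨hf.1.congr fun z hz => (hfg hz).symm, hf.2.congr ?_⟩
  filter_upwards [ae_restrict_mem measurableSet_ball] with z hz
  rw [hfg hz]

theorem mul {h g : ℂ → ℂ} {C : ℝ} (hh : DifferentiableOn ℂ h (ball 0 1))
    (hC : ∀ z ∈ ball (0:ℂ) 1, ‖h z‖ ≤ C) (hg : BergmanDisc g) :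
    BergmanDisc (fun z => h z * g z) := by
  refine ⟨hh.mul hg.1, ?_⟩
  simp only [norm_mul, mul_pow]
  refine hg.2.bdd_mul (c := C ^ 2)
    ((hh.continuousOn.norm.pow 2).aestronglyMeasurable measurableSet_ball) ?_
  filter_upwards [ae_restrict_mem measurableSet_ball] with z hz
  rw [Real.norm_of_nonneg (by positivity)]
  gcongr
  exact hC z hz

theorem sub_mul {g : ℂ → ℂ} (a : ℂ) (hg : BergmanDisc g) :
    BergmanDisc (fun z => (z - a) * g z) := by
  refine hg.mul (C := 1 + ‖a‖) (by fun_prop) fun z hz => ?_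
  have hz : ‖z‖ < 1 := mem_ball_zero_iff.mp hz
  linarith [norm_sub_le z a]

theorem dslope {f : ℂ → ℂ} {a : ℂ} (hf : BergmanDisc f) (ha : a ∈ ball (0:ℂ) 1)
    (hfa : f a = 0) : BergmanDisc (_root_.dslope f a) := by
  have hd : DifferentiableOn ℂ (_root_.dslope f a) (ball 0 1) :=
    (differentiableOn_dslope (isOpen_ball.mem_nhds ha)).2 hf.1
  exact ⟨hd, integrableOn_norm_pow_of_eq_sub_mul isOpen_ball ha 2 hf.2 hd.continuousOn
    fun z _ => (sub_mul_dslope_of_apply_eq_zero hfa z).symm⟩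

end BergmanDisc

/-- If `f ∈ A²(D)` vanishes at `a ∈ D` then `f(z)/(z-a)` (i.e. the holomorphic `g` with
`f = (z-a) g` on `D`) belongs to `A²(D)`; consequently the zero-based invariant subspace
`I_{a} = {f ∈ A² : f(a) = 0}` equals `(z-a) A²(D)`. -/
theorem bergman_zero_div (a : ℂ) (ha : a ∈ ball (0:ℂ) 1) (f : ℂ → ℂ) :
    (BergmanDisc f ∧ f a = 0) ↔
      ∃ g : ℂ → ℂ, BergmanDisc g ∧ ∀ z ∈ ball (0:ℂ) 1, f z = (z - a) * g z := by
  constructor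
  · rintro ⟨hf, hfa⟩
    exact ⟨dslope f a, hf.dslope ha hfa,
      fun z _ => (sub_mul_dslope_of_apply_eq_zero hfa z).symm⟩
  · rintro ⟨g, hg, hfg⟩
    exact ⟨(hg.sub_mul a).congr fun z hz => (hfg z hz).symm, by simpa using hfg a ha⟩
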